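/- Let r ≥ 2, t ≥ 1, and let n, k be integers with k ≥ t and (r−1)·n > r·k − t. Then m(n,k,r,t) ≤ m(n−1,k,r,t) + m(n−1,k−1,r,t), where m(n,k,r,t) denotes the maximum size of an r-wise t-intersecting family of k-element subsets of [n]. -/

import Mathlib

/-- A family `𝓕` is `r`-wise `t`-intersecting if any `r` (not necessarily distinct)
members have at least `t` common elements. -/
def RwiseIntersecting (r t : ℕ) (𝓕 : Finset (Finset ℕ)) : Prop :=
  ∀ G : Fin r → Finset ℕ, (∀ i, G i ∈ 𝓕) → t ≤ (⋂ i, ((G i : Finset ℕ) : Set ℕ)).ncard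

/-- `maxIntersecting n k r t` is the maximum size `m(n,k,r,t)` of an `r`-wise
`t`-intersecting family of `k`-element subsets of `[n]`. -/
noncomputable def maxIntersecting (n k r t : ℕ) : ℕ := by
  classical
  exact ((Finset.powersetCard k (Finset.Icc 1 n)).powerset).sup
    (fun 𝓕 => if RwiseIntersecting r t 𝓕 then 𝓕.card else 0)

/-!
Shift the family: replacing `j` by a smaller `i` (the UV-compression along `{i}, {j}`) preserves
being `r`-wise `t`-intersecting, and a family minimising the sum of all elements of all its members
is invariant under every such shift. A shifted family splits into its members avoiding `n`, a family
on `[n-1]`, and its members containing `n`, with `n` removed. The latter is still `r`-wise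
`t`-intersecting: for `r` members `F m ∋ n`, the bound `r k - t < (r - 1) n` forces some `x < n`
to lie outside two of them, and shifting `n` to `x` in one of these gives `r` members whose common
part is that of the `F m` without `n`.
-/

open Finset UV
open scoped FinsetFamily

lemma RwiseIntersecting.mono {r t : ℕ} {𝓐 𝓑 : Finset (Finset ℕ)} (h : RwiseIntersecting r t 𝓑)
    (h𝓐 : 𝓐 ⊆ 𝓑) : RwiseIntersecting r t 𝓐 :=
  fun G hG => h G fun m => h𝓐 (hG m)

lemma maxIntersecting_le {n k r t c : ℕ}
    (h : ∀ 𝓕 ⊆ powersetCard k (Icc 1 n), RwiseIntersecting r t 𝓕 → #𝓕 ≤ c) :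
    maxIntersecting n k r t ≤ c := by
  unfold maxIntersecting
  refine Finset.sup_le fun 𝓕 h𝓕 => ?_
  split_ifs with hint
  exacts [h 𝓕 (mem_powerset.1 h𝓕) hint, Nat.zero_le _]

lemma card_le_maxIntersecting {n k r t : ℕ} {𝓕 : Finset (Finset ℕ)}
    (h𝓕 : 𝓕 ⊆ powersetCard k (Icc 1 n)) (hint : RwiseIntersecting r t 𝓕) :
    #𝓕 ≤ maxIntersecting n k r t := by
  unfold maxIntersecting
  refine le_trans ?_ (le_sup (mem_powerset.2 h𝓕))
  rw [if_pos hint]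

lemma RwiseIntersecting.le_ncard_iInter_of_mapsTo {r t : ℕ} [Nonempty (Fin r)]
    {𝓕 : Finset (Finset ℕ)} (h : RwiseIntersecting r t 𝓕) {A B : Fin r → Finset ℕ}
    (hB : ∀ m, B m ∈ 𝓕) {f : ℕ → ℕ} (hf : f.Injective)
    (hBA : Set.MapsTo f (⋂ m, (B m : Set ℕ)) (⋂ m, (A m : Set ℕ))) :
    t ≤ (⋂ m, (A m : Set ℕ)).ncard := by
  obtain ⟨m₀⟩ := ‹Nonempty (Fin r)›
  exact (h B hB).trans <| Set.ncard_le_ncard_of_injOn f hBA hf.injOn <|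
    (A m₀).finite_toSet.subset (Set.iInter_subset _ m₀)

namespace UV

lemma compress_le_sup {α : Type*} [GeneralizedBooleanAlgebra α] [DecidableRel (@Disjoint α _ _)]
    [DecidableLE α] (u v a : α) : compress u v a ≤ a ⊔ u := by
  unfold compress
  split_ifs
  exacts [sdiff_le, le_sup_left]

lemma mem_of_mem_compress_singleton {i j x : ℕ} {A : Finset ℕ} (hiA : i ∉ A) (hxi : x ≠ i)
    (hx : x ∈ compress {i} {j} A) : x ∈ A ∧ x ≠ j := by
  unfold compress at hx
  split_ifs at hx with h
  · simpa [hxi] using hx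
  · refine ⟨hx, ?_⟩
    rintro rfl
    exact h ⟨disjoint_singleton_left.2 hiA, singleton_subset_iff.2 hx⟩

lemma sum_compress_lt {i j : ℕ} (hij : i < j) {A : Finset ℕ} (h : compress {i} {j} A ≠ A) :
    ∑ x ∈ compress {i} {j} A, x < ∑ x ∈ A, x := by
  unfold compress at h ⊢
  split_ifs at h ⊢ with hc
  · simp only [disjoint_singleton_left, singleton_subset_iff] at hc
    have : (A ⊔ {i}) \ {j} = insert i (A.erase j) := by
      ext x; simp only [sup_eq_union, mem_sdiff, mem_union, mem_singleton, mem_insert, mem_erase]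
      grind
    rw [this, sum_insert (fun h => hc.1 (mem_of_mem_erase h))]
    have := add_sum_erase A (fun x => x) hc.2
    omega
  · exact absurd rfl h

lemma compression_subset_powersetCard {i j k : ℕ} {U : Finset ℕ} (hi : i ∈ U)
    {𝓕 : Finset (Finset ℕ)} (h𝓕 : 𝓕 ⊆ powersetCard k U) : 𝓒 {i} {j} 𝓕 ⊆ powersetCard k U := by
  intro A hA
  obtain ⟨hA, -⟩ | ⟨-, B, hB, rfl⟩ := mem_compression.1 hA
  · exact h𝓕 hA
  obtain ⟨hBU, hBk⟩ := mem_powersetCard.1 (h𝓕 hB)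
  exact mem_powersetCard.2 ⟨(compress_le_sup _ _ _).trans (union_subset hBU (by simpa using hi)),
    by rw [card_compress (by simp), hBk]⟩

end UV

lemma RwiseIntersecting.uvCompression {r t i j : ℕ} (hij : i ≠ j) {𝓕 : Finset (Finset ℕ)}
    (h : RwiseIntersecting r t 𝓕) : RwiseIntersecting r t (𝓒 {i} {j} 𝓕) := by
  intro A hA
  by_cases hA𝓕 : ∀ m, A m ∈ 𝓕
  · exact h A hA𝓕
  obtain ⟨mc, hmc⟩ := not_forall.1 hA𝓕
  have : Nonempty (Fin r) := ⟨mc⟩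
  -- `B m ∈ 𝓕` is the set that compresses to `A m`; it differs from `A m` only at `i` and `j`.
  set B : Fin r → Finset ℕ := fun m => if A m ∈ 𝓕 then A m else (A m ⊔ {j}) \ {i}
  have hB : ∀ m, B m ∈ 𝓕 := fun m => by
    by_cases hm : A m ∈ 𝓕
    · simp [B, hm]
    · simpa [B, hm] using sup_sdiff_mem_of_mem_compression_of_notMem (hA m) hm
  have hBA : ∀ m x, x ≠ i → x ≠ j → x ∈ B m → x ∈ A m := fun m x hxi hxj hx => by
    by_cases hm : A m ∈ 𝓕 <;> simp_all [B]
  have hiB : i ∉ B mc := by simp [B, hmc]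
  by_cases hiA : ∀ m, i ∈ A m
  · -- `j` may be common to the `B m` but not to the `A m`; swapping `i` and `j` repairs this.
    refine h.le_ncard_iInter_of_mapsTo hB (Equiv.swap i j).injective fun x hx => ?_
    simp only [Set.mem_iInter, mem_coe] at hx ⊢
    intro m
    by_cases hxj : x = j
    · simpa [hxj] using hiA m
    have hxi : x ≠ i := by rintro rfl; exact hiB (hx mc)
    rw [Equiv.swap_apply_of_ne_of_ne hxi hxj]
    exact hBA m x hxi hxj (hx m)
  obtain ⟨m₁, him₁⟩ := not_forall.1 hiA
  have hm₁ : A m₁ ∈ 𝓕 := by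
    by_contra hm₁
    exact him₁ (singleton_subset_iff.1 (le_of_mem_compression_of_notMem (hA m₁) hm₁))
  have hcm₁ : compress {i} {j} (A m₁) ∈ 𝓕 :=
    ((mem_compression.1 (hA m₁)).resolve_right fun h => h.1 hm₁).2
  have hmc₁ : mc ≠ m₁ := by rintro rfl; exact hmc hm₁
  refine h.le_ncard_iInter_of_mapsTo (B := Function.update B m₁ (compress {i} {j} (A m₁)))
    (fun m => ?_) Function.injective_id fun x hx => ?_
  · rcases eq_or_ne m m₁ with rfl | hm
    · simp [hcm₁]
    · simpa [hm] using hB m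
  simp only [Set.mem_iInter, mem_coe, id] at hx ⊢
  have hxi : x ≠ i := by
    rintro rfl
    exact hiB (by simpa [hmc₁] using hx mc)
  obtain ⟨hxA, hxj⟩ := mem_of_mem_compress_singleton him₁ hxi (by simpa using hx m₁)
  intro m
  rcases eq_or_ne m m₁ with rfl | hm
  · exact hxA
  · exact hBA m x hxi hxj (by simpa [hm] using hx m)

def elementSum (𝓕 : Finset (Finset ℕ)) : ℕ := ∑ A ∈ 𝓕, ∑ x ∈ A, x

lemma elementSum_compression_lt {i j : ℕ} (hij : i < j) {𝓕 : Finset (Finset ℕ)}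
    (h : 𝓒 {i} {j} 𝓕 ≠ 𝓕) : elementSum (𝓒 {i} {j} 𝓕) < elementSum 𝓕 := by
  have h𝓜 : {A ∈ 𝓕 | compress {i} {j} A ∉ 𝓕}.Nonempty := by
    contrapose! h
    rw [compression, filter_image, h, image_empty, union_empty, filter_true_of_mem]
    intro A hA
    by_contra hc
    have hA' : A ∈ {A ∈ 𝓕 | compress {i} {j} A ∉ 𝓕} := mem_filter.2 ⟨hA, hc⟩
    simp [h] at hA'
  rw [elementSum, elementSum, compression, sum_union compress_disjoint, filter_image,
    sum_image compress_injOn]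
  conv_rhs => rw [← filter_union_filter_not_eq (fun A => compress {i} {j} A ∈ 𝓕) 𝓕]
  rw [sum_union (disjoint_filter_filter_not _ _ _), add_lt_add_iff_left]
  refine sum_lt_sum_of_nonempty h𝓜 fun A hA => sum_compress_lt hij ?_
  intro hAA
  exact (mem_filter.1 hA).2 (by rw [hAA]; exact (mem_filter.1 hA).1)

def IsShifted (n : ℕ) (𝓕 : Finset (Finset ℕ)) : Prop :=
  ∀ ⦃i j : ℕ⦄, 1 ≤ i → i < j → j ≤ n → IsCompressed {i} {j} 𝓕

lemma exists_isShifted {n k r t : ℕ} {𝓕 : Finset (Finset ℕ)} (h𝓕 : 𝓕 ⊆ powersetCard k (Icc 1 n))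
    (hint : RwiseIntersecting r t 𝓕) :
    ∃ 𝓖 ⊆ powersetCard k (Icc 1 n), RwiseIntersecting r t 𝓖 ∧ #𝓖 = #𝓕 ∧ IsShifted n 𝓖 := by
  classical
  obtain ⟨𝓖, h𝓖, hmin⟩ := exists_min_image
    {𝓖 ∈ (powersetCard k (Icc 1 n)).powerset | RwiseIntersecting r t 𝓖 ∧ #𝓖 = #𝓕}
    elementSum ⟨𝓕, mem_filter.2 ⟨mem_powerset.2 h𝓕, hint, rfl⟩⟩
  obtain ⟨h𝓖, hint𝓖, hcard⟩ := mem_filter.1 h𝓖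
  refine ⟨𝓖, mem_powerset.1 h𝓖, hint𝓖, hcard, fun i j hi hij hjn => ?_⟩
  by_contra hne
  refine (elementSum_compression_lt hij hne).not_ge (hmin _ (mem_filter.2 ⟨?_, ?_, ?_⟩))
  · exact mem_powerset.2 (compression_subset_powersetCard (mem_Icc.2 ⟨hi, by omega⟩)
      (mem_powerset.1 h𝓖))
  · exact hint𝓖.uvCompression hij.ne
  · rw [card_compression, hcard]

lemma sum_card_sdiff_add_ncard_iInter_le {α ι : Type*} [DecidableEq α] [Fintype ι] [Nonempty ι]
    {U : Finset α} {F : ι → Finset α} (hFU : ∀ m, F m ⊆ U)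
    (hdisj : Pairwise fun m m' => Disjoint (U \ F m) (U \ F m')) :
    ∑ m, #(U \ F m) + (⋂ m, (F m : Set α)).ncard ≤ #U := by
  obtain ⟨m₀⟩ := ‹Nonempty ι›
  set T := {x ∈ U | ∀ m, x ∈ F m}
  have hT : (⋂ m, (F m : Set α)).ncard ≤ #T := by
    rw [← Set.ncard_coe_finset]
    refine Set.ncard_le_ncard (fun x hx => ?_)
    simp only [Set.mem_iInter, mem_coe] at hx
    exact mem_filter.2 ⟨hFU m₀ (hx m₀), hx⟩
  have hcard : ∑ m, #(U \ F m) + #T ≤ #U := by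
    rw [← card_biUnion fun m _ m' _ hm => hdisj hm, ← card_union_of_disjoint]
    · exact card_le_card <|
        union_subset (biUnion_subset.2 fun m _ => sdiff_subset) (filter_subset _ _)
    · refine disjoint_left.2 fun x hx hxT => ?_
      obtain ⟨m, -, hxm⟩ := mem_biUnion.1 hx
      exact (mem_sdiff.1 hxm).2 ((mem_filter.1 hxT).2 m)
  omega

lemma RwiseIntersecting.memberSubfamily {n k r t : ℕ} (hn : r * k - t < (r - 1) * n)
    {𝓖 : Finset (Finset ℕ)} (h𝓖 : 𝓖 ⊆ powersetCard k (Icc 1 n)) (hint : RwiseIntersecting r t 𝓖)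
    (hsh : IsShifted n 𝓖) : RwiseIntersecting r t (𝓖.memberSubfamily n) := by
  intro G hG
  have : NeZero r := ⟨by rintro rfl; simp at hn⟩
  set F : Fin r → Finset ℕ := fun m => insert n (G m)
  have hF : ∀ m, F m ∈ 𝓖 := fun m => (mem_memberSubfamily.1 (hG m)).1
  have hFU : ∀ m, F m ⊆ Icc 1 n := fun m => (mem_powersetCard.1 (h𝓖 (hF m))).1
  have hFk : ∀ m, #(F m) = k := fun m => (mem_powersetCard.1 (h𝓖 (hF m))).2
  -- Counting shows that some `x < n` is missing from two of the sets `F m`.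
  have hnotdisj : ¬ Pairwise fun m m' => Disjoint (Icc 1 n \ F m) (Icc 1 n \ F m') := by
    intro hdisj
    have hcount := sum_card_sdiff_add_ncard_iInter_le hFU hdisj
    have hkn : k ≤ n := by simpa [hFk] using card_le_card (hFU 0)
    simp only [card_sdiff_of_subset (hFU _), hFk, Nat.card_Icc, add_tsub_cancel_right, sum_const,
      card_univ, Fintype.card_fin, smul_eq_mul] at hcount
    have := hint F hF
    have := Nat.mul_le_mul_left r hkn
    have : n ≤ r * n := Nat.le_mul_of_pos_left n (NeZero.pos r)
    rw [Nat.mul_sub] at hcount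
    rw [Nat.sub_one_mul] at hn
    omega
  obtain ⟨m₁, m₂, hm₁₂, hx⟩ : ∃ m₁ m₂, m₁ ≠ m₂ ∧ ¬ Disjoint (Icc 1 n \ F m₁) (Icc 1 n \ F m₂) := by
    simpa [Pairwise] using hnotdisj
  obtain ⟨x, hx₁, hx₂⟩ := not_disjoint_iff.1 hx
  obtain ⟨hxU, hxm₁⟩ := mem_sdiff.1 hx₁
  have hxn : x < n := lt_of_le_of_ne (mem_Icc.1 hxU).2 fun h => hxm₁ (h ▸ mem_insert_self _ _)
  have hcF : compress {x} {n} (F m₁) ∈ 𝓖 :=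
    hsh (mem_Icc.1 hxU).1 hxn le_rfl ▸ compress_mem_compression (hF m₁)
  -- Shifting `F m₁` from `n` to `x` kills `n` but no other common element.
  refine hint.le_ncard_iInter_of_mapsTo (B := Function.update F m₁ (compress {x} {n} (F m₁)))
    (fun m => ?_) Function.injective_id fun y hy => ?_
  · rcases eq_or_ne m m₁ with rfl | hm
    · simp [hcF]
    · simpa [hm] using hF m
  simp only [Set.mem_iInter, mem_coe, id] at hy ⊢
  have hyx : y ≠ x := by
    rintro rfl
    exact (mem_sdiff.1 hx₂).2 (by simpa [hm₁₂.symm] using hy m₂)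
  obtain ⟨hyF, hyn⟩ := mem_of_mem_compress_singleton hxm₁ hyx (by simpa using hy m₁)
  intro m
  have hyFm : y ∈ F m := by
    rcases eq_or_ne m m₁ with rfl | hm
    · exact hyF
    · simpa [hm] using hy m
  simpa [F, hyn] using hyFm

lemma nonMemberSubfamily_subset_powersetCard {α : Type*} [DecidableEq α] {a : α} {k : ℕ}
    {U : Finset α} {𝓕 : Finset (Finset α)} (h𝓕 : 𝓕 ⊆ powersetCard k U) :
    𝓕.nonMemberSubfamily a ⊆ powersetCard k (U.erase a) := fun A hA => by
  obtain ⟨hA, haA⟩ := mem_nonMemberSubfamily.1 hA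
  obtain ⟨hAU, hAk⟩ := mem_powersetCard.1 (h𝓕 hA)
  exact mem_powersetCard.2 ⟨subset_erase.2 ⟨hAU, haA⟩, hAk⟩

lemma memberSubfamily_subset_powersetCard {α : Type*} [DecidableEq α] {a : α} {k : ℕ}
    {U : Finset α} {𝓕 : Finset (Finset α)} (h𝓕 : 𝓕 ⊆ powersetCard k U) :
    𝓕.memberSubfamily a ⊆ powersetCard (k - 1) (U.erase a) := fun A hA => by
  obtain ⟨hA, haA⟩ := mem_memberSubfamily.1 hA
  obtain ⟨hAU, hAk⟩ := mem_powersetCard.1 (h𝓕 hA)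
  refine mem_powersetCard.2 ⟨subset_erase.2 ⟨(subset_insert a A).trans hAU, haA⟩, ?_⟩
  rw [← hAk, card_insert_of_notMem haA, add_tsub_cancel_right]

lemma Icc_one_erase (n : ℕ) : (Icc 1 n).erase n = Icc 1 (n - 1) := by
  ext x
  simp only [mem_erase, mem_Icc]
  omega

theorem maxIntersecting_le_add_general
    (n k r t : ℕ) (hn : r * k - t < (r - 1) * n) :
    maxIntersecting n k r t ≤
      maxIntersecting (n - 1) k r t + maxIntersecting (n - 1) (k - 1) r t := by
  refine maxIntersecting_le fun 𝓕 h𝓕 hint => ?_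
  obtain ⟨𝓖, h𝓖, hint𝓖, hcard, hsh⟩ := exists_isShifted h𝓕 hint
  rw [← hcard, ← card_memberSubfamily_add_card_nonMemberSubfamily n 𝓖, add_comm]
  have hnon := nonMemberSubfamily_subset_powersetCard (a := n) h𝓖
  have hmem := memberSubfamily_subset_powersetCard (a := n) h𝓖
  rw [Icc_one_erase] at hnon hmem
  exact add_le_add
    (card_le_maxIntersecting hnon (hint𝓖.mono fun A hA => (mem_nonMemberSubfamily.1 hA).1))
    (card_le_maxIntersecting hmem (hint𝓖.memberSubfamily hn h𝓖 hsh))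

theorem maxIntersecting_le_add
    (n k r t : ℕ) (hr : 2 ≤ r) (ht : 1 ≤ t) (hk : t ≤ k)
    (hn : r * k - t < (r - 1) * n) :
    maxIntersecting n k r t ≤
      maxIntersecting (n - 1) k r t + maxIntersecting (n - 1) (k - 1) r t :=
  maxIntersecting_le_add_general n k r t hn
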